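/- arXiv:1602.08998 — 2 statements merged into one kernel-verified Lean document; each statement's English description precedes it below -/
import Mathlib

section
/- Let I be a monomial ideal of A with M(I) finite, and let V_1,…,V_m be pairwise disjoint nonempty sets of indices whose union is the set of surviving variables {i : e_i ∈ M(I)}. Then the following are equivalent: (i) X_i·X_j ∈ I whenever i and j lie in different parts V_s ≠ V_t; (ii) every vertex a ∈ M(I) has its support supp(a) = {i : a_i > 0} contained in a single part, and two vertices whose supports lie in different parts are never reachable from one another in G(I). (This is the correspondence between such partitions of the variables and the decomposition of the survival complex into m nontrivial or quasi-trivially connected components.) -/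
open MvPolynomial

/-- An ideal of `k[X_1,…,X_n]` is a *monomial ideal* if it is generated by a set
of monomials. -/
def IsMonomialIdeal {k : Type*} [Field k] {n : ℕ}
    (I : Ideal (MvPolynomial (Fin n) k)) : Prop :=
  ∃ S : Set ((Fin n) →₀ ℕ),
    I = Ideal.span ((fun a => (monomial a (1 : k) : MvPolynomial (Fin n) k)) '' S)

/-- `M(I)`: the vertices of the survival complex of `A/I`. -/
def survivors {k : Type*} [Field k] {n : ℕ}
    (I : Ideal (MvPolynomial (Fin n) k)) : Set ((Fin n) →₀ ℕ) :=
  {a | a ≠ 0 ∧ monomial a (1 : k) ∉ I}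

/-- The survival graph `G(I)`: distinct vertices `a, b ∈ M(I)` are adjacent iff
`X^{a+b} ∉ I` (the 1-skeleton of the survival complex). -/
def survGraph {k : Type*} [Field k] {n : ℕ}
    (I : Ideal (MvPolynomial (Fin n) k)) : SimpleGraph ((Fin n) →₀ ℕ) where
  Adj a b := a ≠ b ∧ a ∈ survivors I ∧ b ∈ survivors I ∧ monomial (a + b) (1 : k) ∉ I
  symm := by
    constructor
    rintro a b ⟨h1, h2, h3, h4⟩
    exact ⟨h1.symm, h3, h2, by rwa [add_comm]⟩
  loopless := by
    constructor
    rintro a ⟨h1, -⟩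
    exact h1 rfl

/-!
Survivors are closed under taking nonzero divisors, for any ideal `I`. Hence if all products
`X_i X_j` across parts lie in `I`, no survivor can involve two parts; and for adjacent `a, b`
the sum `a + b` is itself a survivor, so `a` and `b` lie in the same part, which makes parts
invariant under reachability. Conversely, if `X_i X_j ∉ I` with `i, j` in different parts,
then `e_i` and `e_j` are adjacent survivors in different parts.
-/

open Function

theorem SimpleGraph.Reachable.of_adj_preserved {V : Type*} {G : SimpleGraph V} {p : V → Prop}
    (hp : ∀ ⦃a b⦄, G.Adj a b → p a → p b) {a b : V} (h : G.Reachable a b) (ha : p a) : p b := by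
  obtain ⟨w⟩ := h
  induction w with
  | nil => exact ha
  | cons hadj _ ih => exact ih (hp hadj ha)

theorem Finsupp.exists_pos_of_ne_zero {σ : Type*} {a : σ →₀ ℕ} (ha : a ≠ 0) : ∃ i, 0 < a i := by
  obtain ⟨i, hi⟩ := Finsupp.support_nonempty_iff.2 ha
  exact ⟨i, Nat.pos_of_ne_zero (Finsupp.mem_support_iff.1 hi)⟩

theorem Finsupp.single_add_single_le {σ : Type*} {a : σ →₀ ℕ} {i j : σ} (hij : i ≠ j)
    (hi : 0 < a i) (hj : 0 < a j) : Finsupp.single i 1 + Finsupp.single j 1 ≤ a := by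
  classical
  intro x
  simp only [Finsupp.add_apply, Finsupp.single_apply]
  split_ifs <;> grind

theorem Finsupp.eq_of_pos_imp_mem {σ ι : Type*} {V : ι → Set σ} (hV : Pairwise (Disjoint on V))
    {a : σ →₀ ℕ} (ha : a ≠ 0) {s t : ι} (hs : ∀ i, 0 < a i → i ∈ V s)
    (ht : ∀ i, 0 < a i → i ∈ V t) : s = t := by
  obtain ⟨i, hi⟩ := Finsupp.exists_pos_of_ne_zero ha
  by_contra hst
  exact Set.disjoint_left.1 (hV hst) (hs i hi) (ht i hi)

theorem MvPolynomial.monomial_one_mem_of_le {σ R : Type*} [CommSemiring R]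
    {I : Ideal (MvPolynomial σ R)} {a b : σ →₀ ℕ} (hab : a ≤ b)
    (ha : monomial a (1 : R) ∈ I) : monomial b (1 : R) ∈ I :=
  I.mem_of_dvd (monomial_dvd_monomial.2 ⟨Or.inr hab, one_dvd _⟩) ha

theorem MvPolynomial.X_mul_X_eq_monomial {σ R : Type*} [CommSemiring R] (i j : σ) :
    (X i * X j : MvPolynomial σ R) = monomial (Finsupp.single i 1 + Finsupp.single j 1) 1 := by
  rw [X, X, monomial_mul, mul_one]

section Survivors

variable {k : Type*} [Field k] {n : ℕ} {I : Ideal (MvPolynomial (Fin n) k)}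
  {a b : Fin n →₀ ℕ}

theorem mem_survivors_of_le (ha : a ∈ survivors I) (hba : b ≤ a) (hb : b ≠ 0) :
    b ∈ survivors I :=
  ⟨hb, fun hbI => ha.2 (monomial_one_mem_of_le hba hbI)⟩

theorem single_mem_survivors (ha : a ∈ survivors I) {i : Fin n} (hi : 0 < a i) :
    Finsupp.single i 1 ∈ survivors I :=
  mem_survivors_of_le ha (Finsupp.single_le_iff.2 hi) (by simp)

theorem X_mul_X_notMem_of_mem_survivors (ha : a ∈ survivors I) {i j : Fin n} (hij : i ≠ j)
    (hi : 0 < a i) (hj : 0 < a j) : (X i * X j : MvPolynomial (Fin n) k) ∉ I := by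
  rw [X_mul_X_eq_monomial]
  exact fun h => ha.2 (monomial_one_mem_of_le (Finsupp.single_add_single_le hij hi hj) h)

theorem add_mem_survivors_of_adj (h : (survGraph I).Adj a b) : a + b ∈ survivors I :=
  ⟨fun h0 => h.2.1.1 (add_eq_zero.1 h0).1, h.2.2.2⟩

theorem survGraph_adj_single_single {i j : Fin n} (hij : i ≠ j)
    (hi : Finsupp.single i 1 ∈ survivors I) (hj : Finsupp.single j 1 ∈ survivors I)
    (hX : (X i * X j : MvPolynomial (Fin n) k) ∉ I) :
    (survGraph I).Adj (Finsupp.single i 1) (Finsupp.single j 1) :=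
  ⟨fun h => hij (Finsupp.single_left_injective one_ne_zero h), hi, hj,
    by rwa [X_mul_X_eq_monomial] at hX⟩

end Survivors

section Parts

variable {k : Type*} [Field k] {n : ℕ} {I : Ideal (MvPolynomial (Fin n) k)}
  {ι : Type*} {V : ι → Set (Fin n)}

theorem exists_part_of_mem_survivors
    (hcover : {i | Finsupp.single i 1 ∈ survivors I} ⊆ ⋃ t, V t)
    (hprod : ∀ s t, s ≠ t → ∀ i ∈ V s, ∀ j ∈ V t, (X i * X j : MvPolynomial (Fin n) k) ∈ I)
    {a : Fin n →₀ ℕ} (ha : a ∈ survivors I) : ∃ s, ∀ i, 0 < a i → i ∈ V s := by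
  have hpart (i : Fin n) (hi : 0 < a i) : ∃ s, i ∈ V s :=
    Set.mem_iUnion.1 (hcover (single_mem_survivors ha hi))
  obtain ⟨i₀, hi₀⟩ := Finsupp.exists_pos_of_ne_zero ha.1
  obtain ⟨s, hs⟩ := hpart i₀ hi₀
  refine ⟨s, fun i hi => ?_⟩
  obtain ⟨t, ht⟩ := hpart i hi
  by_contra his
  have hts : t ≠ s := fun h => his (h ▸ ht)
  have hii₀ : i ≠ i₀ := fun h => his (h ▸ hs)
  exact X_mul_X_notMem_of_mem_survivors ha hii₀ hi hi₀ (hprod t s hts i ht i₀ hs)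

theorem pos_imp_mem_of_survGraph_adj (hV : Pairwise (Disjoint on V))
    (hsupp : ∀ a ∈ survivors I, ∃ s, ∀ i, 0 < a i → i ∈ V s) {a b : Fin n →₀ ℕ}
    (hab : (survGraph I).Adj a b) {s : ι}
    (ha : ∀ i, 0 < a i → i ∈ V s) : ∀ i, 0 < b i → i ∈ V s := by
  obtain ⟨u, hu⟩ := hsupp _ (add_mem_survivors_of_adj hab)
  obtain rfl : s = u := Finsupp.eq_of_pos_imp_mem hV hab.2.1.1 ha
    fun i hi => hu i (by simp only [Finsupp.add_apply]; omega)
  exact fun i hi => hu i (by simp only [Finsupp.add_apply]; omega)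

theorem pos_imp_mem_of_survGraph_reachable (hV : Pairwise (Disjoint on V))
    (hsupp : ∀ a ∈ survivors I, ∃ s, ∀ i, 0 < a i → i ∈ V s) {a b : Fin n →₀ ℕ}
    (hab : (survGraph I).Reachable a b) {s : ι} (ha : ∀ i, 0 < a i → i ∈ V s) :
    ∀ i, 0 < b i → i ∈ V s :=
  hab.of_adj_preserved (fun _ _ h => pos_imp_mem_of_survGraph_adj hV hsupp h) ha

end Parts

theorem components_iff_pairwise_products_general
    {k : Type*} [Field k] {n m : ℕ}
    (I : Ideal (MvPolynomial (Fin n) k))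
    (V : Fin m → Set (Fin n))
    (hVdisj : ∀ s t : Fin m, s ≠ t → Disjoint (V s) (V t))
    (hVcover : (⋃ t, V t) = {i : Fin n | Finsupp.single i 1 ∈ survivors I}) :
    (∀ s t : Fin m, s ≠ t → ∀ i ∈ V s, ∀ j ∈ V t,
        (X i : MvPolynomial (Fin n) k) * X j ∈ I) ↔
      ((∀ a ∈ survivors I, ∃ s : Fin m, ∀ i : Fin n, 0 < a i → i ∈ V s) ∧
        ∀ a ∈ survivors I, ∀ b ∈ survivors I, ∀ s t : Fin m, s ≠ t →
          (∀ i : Fin n, 0 < a i → i ∈ V s) → (∀ j : Fin n, 0 < b j → j ∈ V t) →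
            ¬ (survGraph I).Reachable a b) := by
  have hsingle {i : Fin n} {s : Fin m} (hi : i ∈ V s) : Finsupp.single i 1 ∈ survivors I :=
    hVcover.subset (Set.mem_iUnion_of_mem s hi)
  have hsingle_pos {i : Fin n} {s : Fin m} (hi : i ∈ V s) :
      ∀ x, 0 < Finsupp.single i 1 x → x ∈ V s :=
    fun x hx => (Finsupp.single_apply_ne_zero.1 hx.ne').1 ▸ hi
  constructor
  · intro hprod
    have hsupp := fun a (ha : a ∈ survivors I) =>
      exists_part_of_mem_survivors hVcover.symm.subset hprod ha
    refine ⟨hsupp, fun a _ b hb s t hst has hbt hab => hst ?_⟩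
    exact Finsupp.eq_of_pos_imp_mem hVdisj hb.1
      (pos_imp_mem_of_survGraph_reachable hVdisj hsupp hab has) hbt
  · rintro ⟨-, hsep⟩ s t hst i hi j hj
    by_contra hX
    have hij : i ≠ j := fun h => Set.disjoint_left.1 (hVdisj s t hst) hi (h ▸ hj)
    exact hsep _ (hsingle hi) _ (hsingle hj) s t hst (hsingle_pos hi) (hsingle_pos hj)
      (survGraph_adj_single_single hij (hsingle hi) (hsingle hj) hX).reachable

/-- The survival complex splits into components along a partition
`V_1,…,V_m` of the surviving variables if and only if the ideal contains all
pairwise products of variables from distinct parts. -/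
theorem components_iff_pairwise_products
    {k : Type*} [Field k] {n m : ℕ} (hn : 1 ≤ n)
    (I : Ideal (MvPolynomial (Fin n) k)) (hI : IsMonomialIdeal I)
    (hfin : (survivors I).Finite)
    (V : Fin m → Set (Fin n))
    (hVne : ∀ t, (V t).Nonempty)
    (hVdisj : ∀ s t : Fin m, s ≠ t → Disjoint (V s) (V t))
    (hVcover : (⋃ t, V t) = {i : Fin n | Finsupp.single i 1 ∈ survivors I}) :
    (∀ s t : Fin m, s ≠ t → ∀ i ∈ V s, ∀ j ∈ V t,
        (X i : MvPolynomial (Fin n) k) * X j ∈ I) ↔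
      ((∀ a ∈ survivors I, ∃ s : Fin m, ∀ i : Fin n, 0 < a i → i ∈ V s) ∧
        ∀ a ∈ survivors I, ∀ b ∈ survivors I, ∀ s t : Fin m, s ≠ t →
          (∀ i : Fin n, 0 < a i → i ∈ V s) → (∀ j : Fin n, 0 < b j → j ∈ V t) →
            ¬ (survGraph I).Reachable a b) :=
  components_iff_pairwise_products_general I V hVdisj hVcover
end

section
/- (Beintema's theorem, socle formulation) Let I be a proper monomial ideal of A such that for every i some power X_i^{c_i} lies in I (so I has height n and A/I is Artinian). Then dim_k soc(A/I) = 1 (equivalently A/I is Gorenstein) if and only if I can be generated by n monomials, i.e. there exist exponent vectors b_1,…,b_n with I = (X^{b_1},…,X^{b_n}) (equivalently, I is a complete intersection, generated by pure powers of the variables). -/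
open MvPolynomial

/-- The image of the maximal ideal `(X_1,…,X_n)` in `R = A/I`. -/
noncomputable def maxIdealImage {k : Type*} [Field k] {n : ℕ}
    (I : Ideal (MvPolynomial (Fin n) k)) :
    Ideal (MvPolynomial (Fin n) k ⧸ I) :=
  Ideal.map (Ideal.Quotient.mk I)
    (Ideal.span (Set.range (X : Fin n → MvPolynomial (Fin n) k)))

/-- The socle of `R = A/I`, regarded as a `k`-subspace of `R`. -/
def socle {k : Type*} [Field k] {n : ℕ}
    (I : Ideal (MvPolynomial (Fin n) k)) :
    Submodule k (MvPolynomial (Fin n) k ⧸ I) where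
  carrier := {r | ∀ x ∈ maxIdealImage I, r * x = 0}
  add_mem' := by
    intro r s hr hs x hx
    rw [add_mul, hr x hx, hs x hx, add_zero]
  zero_mem' := by
    intro x hx
    rw [zero_mul]
  smul_mem' := by
    intro c r hr x hx
    rw [smul_mul_assoc, hr x hx, smul_zero]

/-!
Call `X^a` a socle monomial of `I` if `X^a ∉ I` but `X_i X^a ∈ I` for every `i`. Its residue lies
in the socle of `A/I`; conversely every monomial occurring in a socle element is either in `I` or
a socle monomial, and distinct socle monomials are not proportional modulo `I`. Hence `A/I` has a
one-dimensional socle iff `I` has exactly one socle monomial `X^a`.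
Since `I` contains a power of each variable, every monomial outside `I` divides a socle monomial,
so a unique socle monomial `X^a` means that the monomials outside `I` are exactly the divisors of
`X^a`, i.e. `I = (X_1^{a_1+1}, …, X_n^{a_n+1})`. Conversely, if `I` is generated by `n`
monomials, each `X_i^{c_i} ∈ I` is divisible by a generator, which must be a positive power of
`X_i`; having only `n` generators, all of them are such pure powers, of distinct variables.
-/

section MonomialIdeal

variable {σ R : Type*} [CommSemiring R] {I : Ideal (MvPolynomial σ R)}

theorem monomial_mem_of_le {d e : σ →₀ ℕ} (hd : monomial d (1 : R) ∈ I) (hde : d ≤ e) :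
    monomial e (1 : R) ∈ I :=
  I.mem_of_dvd (monomial_dvd_monomial.2 ⟨Or.inr hde, one_dvd _⟩) hd

theorem monomial_mem_span_monomial_image_iff [Nontrivial R] {s : Set (σ →₀ ℕ)} {d : σ →₀ ℕ} :
    monomial d (1 : R) ∈ Ideal.span ((fun t => monomial t (1 : R)) '' s) ↔ ∃ t ∈ s, t ≤ d := by
  classical
  simp [mem_ideal_span_monomial_image, support_monomial]

def IsSocleMonomial (I : Ideal (MvPolynomial σ R)) (a : σ →₀ ℕ) : Prop :=
  monomial a (1 : R) ∉ I ∧ ∀ i, monomial (a + Finsupp.single i 1) (1 : R) ∈ I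

theorem exists_le_isSocleMonomial [Finite σ] (hpow : ∀ i, ∃ c, (X i : MvPolynomial σ R) ^ c ∈ I)
    {d : σ →₀ ℕ} (hd : monomial d (1 : R) ∉ I) : ∃ a, d ≤ a ∧ IsSocleMonomial I a := by
  classical
  choose c hc using hpow
  simp only [X_pow_eq_monomial] at hc
  have hbounded : {e | monomial e (1 : R) ∉ I} ⊆ Set.Iic (Finsupp.equivFunOnFinite.symm c) :=
    fun e he => Finsupp.le_def.2 fun i =>
      le_of_not_ge fun hi => he (monomial_mem_of_le (hc i) (Finsupp.single_le_iff.2 hi))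
  obtain ⟨a, hda, hmax⟩ := ((Set.finite_Iic _).subset hbounded).exists_le_maximal hd
  refine ⟨a, hda, hmax.prop, fun i => not_not.1 fun hi => hmax.not_gt hi ?_⟩
  exact lt_add_of_pos_right a (by simp [pos_iff_ne_zero])

theorem isSocleMonomial_iff_eq {a m : σ →₀ ℕ}
    (ha : ∀ d, monomial d (1 : R) ∈ I ↔ ¬ d ≤ a) : IsSocleMonomial I m ↔ m = a := by
  classical
  simp only [IsSocleMonomial, ha, not_not]
  constructor
  · rintro ⟨hma, hmax⟩
    refine le_antisymm hma (Finsupp.le_def.2 fun i => not_lt.1 fun hi => hmax i ?_)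
    refine Finsupp.le_def.2 fun j => ?_
    rcases eq_or_ne i j with rfl | hij
    · simpa using hi
    · simpa [Finsupp.single_apply, hij] using hma j
  · rintro rfl
    exact ⟨le_rfl, fun i h => by simpa using Finsupp.le_def.1 h i⟩

theorem existsUnique_isSocleMonomial_iff [Finite σ]
    (hpow : ∀ i, ∃ c, (X i : MvPolynomial σ R) ^ c ∈ I) :
    (∃! a, IsSocleMonomial I a) ↔ ∃ a, ∀ d, monomial d (1 : R) ∈ I ↔ ¬ d ≤ a := by
  constructor
  · rintro ⟨a, ha, huniq⟩
    refine ⟨a, fun d => ⟨fun hd hda => ha.1 (monomial_mem_of_le hd hda), fun hda => ?_⟩⟩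
    by_contra hd
    obtain ⟨m, hdm, hm⟩ := exists_le_isSocleMonomial hpow hd
    exact hda (huniq m hm ▸ hdm)
  · rintro ⟨a, ha⟩
    exact ⟨a, (isSocleMonomial_iff_eq ha).2 rfl, fun m => (isSocleMonomial_iff_eq ha).1⟩

theorem exists_forall_monomial_mem_iff_not_le_of_eq_span [Nontrivial R] [Finite σ] {b : σ → σ →₀ ℕ}
    (hb : I = Ideal.span (Set.range fun i => monomial (b i) (1 : R))) (hI : I ≠ ⊤)
    (hpow : ∀ i, ∃ c, (X i : MvPolynomial σ R) ^ c ∈ I) :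
    ∃ a : σ →₀ ℕ, ∀ d, monomial d (1 : R) ∈ I ↔ ¬ d ≤ a := by
  have hmem (d : σ →₀ ℕ) : monomial d (1 : R) ∈ I ↔ ∃ j, b j ≤ d := by
    rw [hb, Set.range_comp' (fun t => monomial t (1 : R)) b, monomial_mem_span_monomial_image_iff,
      Set.exists_range_iff]
  have hpure (i : σ) : ∃ j, b j = Finsupp.single i (b j i) ∧ 0 < b j i := by
    obtain ⟨c, hc⟩ := hpow i
    obtain ⟨j, hj⟩ := (hmem _).1 (X_pow_eq_monomial (R := R) ▸ hc)
    have hbj : b j = Finsupp.single i (b j i) := Finsupp.support_subset_singleton.1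
      ((Finsupp.support_mono hj).trans Finsupp.support_single_subset)
    refine ⟨j, hbj, Nat.pos_of_ne_zero fun h0 => hI ?_⟩
    rw [Ideal.eq_top_iff_one, one_def]
    exact (hmem 0).2 ⟨j, by rw [hbj, h0, Finsupp.single_zero]⟩
  choose f hf hpos using hpure
  have hf_inj : f.Injective := fun i i' h => by
    have hsingle := (hf i).symm.trans (h ▸ hf i')
    rw [Finsupp.single_eq_single_iff] at hsingle
    exact (hsingle.resolve_right fun h0 => (hpos i).ne' h0.1).1
  refine ⟨Finsupp.equivFunOnFinite.symm fun i => b (f i) i - 1, fun d => ?_⟩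
  rw [hmem, (Finite.injective_iff_surjective.1 hf_inj).exists, Finsupp.le_def]
  push Not
  refine exists_congr fun i => ?_
  rw [hf i, Finsupp.single_le_iff, Finsupp.equivFunOnFinite_symm_apply_apply]
  have := hpos i
  omega

end MonomialIdeal

section Socle

variable {k : Type*} [Field k] {n : ℕ} {I : Ideal (MvPolynomial (Fin n) k)}

theorem mk_mem_socle_iff {p : MvPolynomial (Fin n) k} :
    Ideal.Quotient.mk I p ∈ socle I ↔ ∀ i, p * X i ∈ I := by
  refine Submodule.mem_annihilator.symm.trans ?_
  rw [maxIdealImage, Ideal.map_span, ← Set.range_comp, Ideal.span, Submodule.mem_annihilator_span]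
  simp [← map_mul, Ideal.Quotient.eq_zero_iff_mem]

theorem IsSocleMonomial.mk_mem_socle {a : Fin n →₀ ℕ} (ha : IsSocleMonomial I a) :
    Ideal.Quotient.mk I (monomial a 1) ∈ socle I :=
  mk_mem_socle_iff.2 fun i => by simpa [X, monomial_mul] using ha.2 i

theorem IsSocleMonomial.mk_ne_zero {a : Fin n →₀ ℕ} (ha : IsSocleMonomial I a) :
    (⟨_, ha.mk_mem_socle⟩ : socle I) ≠ 0 := fun h0 =>
  ha.1 (Ideal.Quotient.eq_zero_iff_mem.1 (congrArg Subtype.val h0))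

namespace IsMonomialIdeal

theorem mem_iff (hI : IsMonomialIdeal I) {p : MvPolynomial (Fin n) k} :
    p ∈ I ↔ ∀ d ∈ p.support, monomial d (1 : k) ∈ I := by
  obtain ⟨S, rfl⟩ := hI
  rw [mem_ideal_span_monomial_image]
  simp only [monomial_mem_span_monomial_image_iff]

theorem mk_mem_socle_iff (hI : IsMonomialIdeal I) {p : MvPolynomial (Fin n) k} :
    Ideal.Quotient.mk I p ∈ socle I ↔
      ∀ d ∈ p.support, ∀ i, monomial (d + Finsupp.single i 1) (1 : k) ∈ I := by
  have hmul (i : Fin n) :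
      p * X i ∈ I ↔ ∀ d ∈ p.support, monomial (d + Finsupp.single i 1) (1 : k) ∈ I := by
    rw [hI.mem_iff, support_mul_X, Finset.forall_mem_map]
    rfl
  simp only [_root_.mk_mem_socle_iff, hmul]
  exact ⟨fun h d hd i => h i d hd, fun h i d hd => h d hd i⟩

theorem finrank_socle_eq_one_of_existsUnique (hI : IsMonomialIdeal I)
    (h : ∃! a, IsSocleMonomial I a) : Module.finrank k (socle I) = 1 := by
  obtain ⟨a, ha, huniq⟩ := h
  refine (finrank_eq_one_iff_of_nonzero' _ ha.mk_ne_zero).2 fun ⟨w, hw⟩ => ?_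
  obtain ⟨p, rfl⟩ := Ideal.Quotient.mk_surjective w
  refine ⟨coeff a p, Subtype.ext ?_⟩
  change Ideal.Quotient.mk I (coeff a p • monomial a 1) = Ideal.Quotient.mk I p
  rw [smul_monomial, smul_eq_mul, mul_one, Ideal.Quotient.eq, hI.mem_iff]
  intro d hd
  have hda : d ≠ a := by
    rintro rfl
    simp at hd
  have hdp : d ∈ p.support := by
    simpa [coeff_monomial, Ne.symm hda] using hd
  by_contra hdI
  exact hda (huniq d ⟨hdI, hI.mk_mem_socle_iff.1 hw d hdp⟩)

theorem existsUnique_isSocleMonomial_of_finrank_socle_eq_one (hI : IsMonomialIdeal I)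
    (hproper : I ≠ ⊤) (hpow : ∀ i, ∃ c, (X i : MvPolynomial (Fin n) k) ^ c ∈ I)
    (h : Module.finrank k (socle I) = 1) : ∃! a, IsSocleMonomial I a := by
  have hone : monomial 0 (1 : k) ∉ I := by
    rwa [← one_def, ← Ideal.eq_top_iff_one]
  obtain ⟨a, -, ha⟩ := exists_le_isSocleMonomial hpow hone
  refine ⟨a, ha, fun m hm => by_contra fun hma => hm.1 ?_⟩
  obtain ⟨c, hc⟩ := (finrank_eq_one_iff_of_nonzero' _ ha.mk_ne_zero).1 h ⟨_, hm.mk_mem_socle⟩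
  have hdiff : c • monomial a (1 : k) - monomial m 1 ∈ I :=
    Ideal.Quotient.eq.1 (congrArg Subtype.val hc)
  refine hI.mem_iff.1 hdiff m ?_
  simp [coeff_monomial, Ne.symm hma]

theorem finrank_socle_eq_one_iff (hI : IsMonomialIdeal I) (hproper : I ≠ ⊤)
    (hpow : ∀ i, ∃ c, (X i : MvPolynomial (Fin n) k) ^ c ∈ I) :
    Module.finrank k (socle I) = 1 ↔ ∃! a, IsSocleMonomial I a :=
  ⟨hI.existsUnique_isSocleMonomial_of_finrank_socle_eq_one hproper hpow,
    hI.finrank_socle_eq_one_of_existsUnique⟩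

theorem eq_span_range_monomial_single (hI : IsMonomialIdeal I) {a : Fin n →₀ ℕ}
    (ha : ∀ d, monomial d (1 : k) ∈ I ↔ ¬ d ≤ a) :
    I = Ideal.span (Set.range fun i =>
      (monomial (Finsupp.single i (a i + 1)) (1 : k) : MvPolynomial (Fin n) k)) := by
  refine Ideal.ext fun p => ?_
  rw [hI.mem_iff, Set.range_comp' (fun t => monomial t (1 : k)), mem_ideal_span_monomial_image]
  refine forall₂_congr fun d _ => ?_
  simp_rw [ha, Set.exists_range_iff, Finsupp.single_le_iff, Finsupp.le_def, not_forall, not_le,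
    Nat.lt_iff_add_one_le]

end IsMonomialIdeal

end Socle

theorem beintema_gorenstein_iff_complete_intersection_general
    {k : Type*} [Field k] {n : ℕ}
    (I : Ideal (MvPolynomial (Fin n) k)) (hI : IsMonomialIdeal I)
    (hproper : I ≠ ⊤)
    (hartinian : ∀ i : Fin n, ∃ c : ℕ, (X i : MvPolynomial (Fin n) k) ^ c ∈ I) :
    Module.finrank k (socle I) = 1 ↔
      ∃ b : Fin n → ((Fin n) →₀ ℕ),
        I = Ideal.span (Set.range fun i : Fin n =>
          (monomial (b i) (1 : k) : MvPolynomial (Fin n) k)) := by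
  rw [hI.finrank_socle_eq_one_iff hproper hartinian, existsUnique_isSocleMonomial_iff hartinian]
  constructor
  · rintro ⟨a, ha⟩
    exact ⟨_, hI.eq_span_range_monomial_single ha⟩
  · rintro ⟨b, hb⟩
    exact exists_forall_monomial_mem_iff_not_le_of_eq_span hb hproper hartinian

/-- **Beintema's theorem** (socle formulation): for a proper monomial ideal `I`
of height `n` (i.e. containing a power of each variable), `A/I` is Gorenstein
(has one-dimensional socle) if and only if `I` can be generated by `n`
monomials, i.e. `I` is a complete intersection. -/
theorem beintema_gorenstein_iff_complete_intersection
    {k : Type*} [Field k] {n : ℕ} (hn : 1 ≤ n)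
    (I : Ideal (MvPolynomial (Fin n) k)) (hI : IsMonomialIdeal I)
    (hproper : I ≠ ⊤)
    (hartinian : ∀ i : Fin n, ∃ c : ℕ, (X i : MvPolynomial (Fin n) k) ^ c ∈ I) :
    Module.finrank k (socle I) = 1 ↔
      ∃ b : Fin n → ((Fin n) →₀ ℕ),
        I = Ideal.span (Set.range fun i : Fin n =>
          (monomial (b i) (1 : k) : MvPolynomial (Fin n) k)) :=
  beintema_gorenstein_iff_complete_intersection_general I hI hproper hartinian
end
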